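/- Let F be a field of characteristic different from 2 and let a₁, a₂, a₃ ∈ Fˣ. Then the quadratic form a₁x² + a₂y² + a₃z² has a nontrivial zero over F if and only if −a₁a₂ is a square in F, or there exist s, v ∈ F with −a₁a₃ = s² + a₁a₂·v² (i.e. −a₃ is represented by the binary form a₁x² + a₂y², equivalently a₃ lies in a₁ times the norm group of F(√(−a₁a₂))/F). -/

import Mathlib

namespace DiagonalForm

variable {F : Type*} [Field F] {a₁ a₂ a₃ : F}

theorem binary_isotropic_iff (h₁ : a₁ ≠ 0) :
    (∃ x y : F, ¬(x = 0 ∧ y = 0) ∧ a₁ * x ^ 2 + a₂ * y ^ 2 = 0) ↔ ∃ s : F, -(a₁ * a₂) = s ^ 2 := by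
  constructor
  · rintro ⟨x, y, hxy, hzero⟩
    have hy : y ≠ 0 := by
      rintro rfl
      have : a₁ * x ^ 2 = 0 := by simpa using hzero
      simp_all
    refine ⟨a₁ * x / y, ?_⟩
    field_simp
    linear_combination -hzero
  · rintro ⟨s, hs⟩
    exact ⟨s, a₁, fun h ↦ h₁ h.2, by linear_combination -a₁ * hs⟩

-- Multiplying by `a₁` turns `a₁x² + a₂y²` into the norm form `(a₁x)² + a₁a₂y²`.
theorem represents_neg_iff (h₁ : a₁ ≠ 0) :
    (∃ x y : F, a₁ * x ^ 2 + a₂ * y ^ 2 + a₃ = 0) ↔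
      ∃ s v : F, -(a₁ * a₃) = s ^ 2 + a₁ * a₂ * v ^ 2 := by
  constructor
  · rintro ⟨x, y, h⟩
    exact ⟨a₁ * x, y, by linear_combination -a₁ * h⟩
  · rintro ⟨s, v, h⟩
    refine ⟨s / a₁, v, ?_⟩
    field_simp
    linear_combination -h

theorem ternary_isotropic_iff :
    (∃ x y z : F, ¬(x = 0 ∧ y = 0 ∧ z = 0) ∧ a₁ * x ^ 2 + a₂ * y ^ 2 + a₃ * z ^ 2 = 0) ↔
      (∃ x y : F, ¬(x = 0 ∧ y = 0) ∧ a₁ * x ^ 2 + a₂ * y ^ 2 = 0) ∨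
        ∃ x y : F, a₁ * x ^ 2 + a₂ * y ^ 2 + a₃ = 0 := by
  constructor
  · rintro ⟨x, y, z, hxyz, hzero⟩
    by_cases hz : z = 0
    · subst hz
      exact Or.inl ⟨x, y, fun h ↦ hxyz ⟨h.1, h.2, rfl⟩, by simpa using hzero⟩
    · refine Or.inr ⟨x / z, y / z, ?_⟩
      field_simp
      linear_combination hzero
  · rintro (⟨x, y, hxy, hzero⟩ | ⟨x, y, hzero⟩)
    · exact ⟨x, y, 0, fun h ↦ hxy ⟨h.1, h.2.1⟩, by simpa using hzero⟩
    · exact ⟨x, y, 1, fun h ↦ one_ne_zero h.2.2, by simpa using hzero⟩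

end DiagonalForm

open DiagonalForm in
theorem ternary_isotropic_criterion_general
    (F : Type*) [Field F]
    (a₁ a₂ a₃ : F) (h₁ : a₁ ≠ 0) :
    (∃ x y z : F, ¬(x = 0 ∧ y = 0 ∧ z = 0) ∧
        a₁ * x ^ 2 + a₂ * y ^ 2 + a₃ * z ^ 2 = 0) ↔
      ((∃ s : F, -(a₁ * a₂) = s ^ 2) ∨
        (∃ s v : F, -(a₁ * a₃) = s ^ 2 + a₁ * a₂ * v ^ 2)) := by
  rw [ternary_isotropic_iff, binary_isotropic_iff h₁, represents_neg_iff h₁]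

/-- Over any field `F` of characteristic not `2`, the ternary diagonal form
`a₁x² + a₂y² + a₃z²` with nonzero coefficients is isotropic iff `−a₁a₂` is a square in `F`
or `−a₁a₃ = s² + a₁a₂·v²` for some `s, v ∈ F`. -/
theorem ternary_isotropic_criterion
    (F : Type*) [Field F] (hF : ringChar F ≠ 2)
    (a₁ a₂ a₃ : F) (h₁ : a₁ ≠ 0) (h₂ : a₂ ≠ 0) (h₃ : a₃ ≠ 0) :
    (∃ x y z : F, ¬(x = 0 ∧ y = 0 ∧ z = 0) ∧
        a₁ * x ^ 2 + a₂ * y ^ 2 + a₃ * z ^ 2 = 0) ↔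
      ((∃ s : F, -(a₁ * a₂) = s ^ 2) ∨
        (∃ s v : F, -(a₁ * a₃) = s ^ 2 + a₁ * a₂ * v ^ 2)) :=
  ternary_isotropic_criterion_general F a₁ a₂ a₃ h₁
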